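/- arXiv:1211.0976 — 6 statements merged into one kernel-verified Lean document; each statement's English description precedes it below -/
import Mathlib

section
/- The polynomial ring k[ξ₁,…,ξₙ] is a finitely generated module over the k-subalgebra S of k[ξ₁,…,ξₙ] generated by the set {σ'(Q) : Q ∈ B, Q ≠ 0}. -/
/-!
Setup: `k` a field of characteristic zero, `R = k[[x₁,…,xₙ]] = MvPowerSeries (Fin n) k`,
and `D = R[∂₁,…,∂ₙ]` the ring of partial differential operators, realized inside
`Module.End k R`.  An operator is represented by its (unique) finitely supported family
of coefficients `p : (Fin n →₀ ℕ) →₀ R`, giving the operator `toOp p = Σ_α p_α ∂^α`.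
A commutative `k`-subalgebra `B` of `D` is modelled as a commutative `k`-algebra together
with an injective `k`-algebra homomorphism `ι` into `Module.End k R` all of whose values
are differential operators.
-/

noncomputable section

open scoped BigOperators

variable (n : ℕ) (k : Type) [Field k] [CharZero k]

/-- The partial derivative `∂ᵢ` as a `k`-linear endomorphism of `k[[x₁,…,xₙ]]`. -/
def derivOp (i : Fin n) : Module.End k (MvPowerSeries (Fin n) k) where
  toFun f := fun m => ((m i : k) + 1) * f (m + Finsupp.single i 1)
  map_add' f g := by funext m; exact mul_add _ _ _
  map_smul' c f := by funext m; exact mul_left_comm _ _ _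

/-- The operator of multiplication by `g ∈ k[[x₁,…,xₙ]]`. -/
def mulOp (g : MvPowerSeries (Fin n) k) : Module.End k (MvPowerSeries (Fin n) k) :=
  LinearMap.mulLeft k g

/-- The differential operator `Σ_α p_α ∂^α` associated to a finitely supported
coefficient family `p`. -/
def toOp (p : (Fin n →₀ ℕ) →₀ MvPowerSeries (Fin n) k) :
    Module.End k (MvPowerSeries (Fin n) k) :=
  p.sum fun α g => mulOp n k g * (List.ofFn fun i : Fin n => (derivOp n k i) ^ (α i)).prod

/-- The total degree `|α|` of a multi-index. -/
def degOf (α : Fin n →₀ ℕ) : ℕ := α.sum fun _ e => e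

/-- The order of the operator with coefficient family `p`:
`ord(P) = max { |α| : p_α ≠ 0 }`. -/
def ordOf (p : (Fin n →₀ ℕ) →₀ MvPowerSeries (Fin n) k) : ℕ :=
  p.support.sup (degOf n)

/-- The principal symbol `σ(P) = Σ_{|α| = ord P} p_α ξ^α ∈ R[ξ₁,…,ξₙ]`. -/
def symbolFull (p : (Fin n →₀ ℕ) →₀ MvPowerSeries (Fin n) k) :
    MvPolynomial (Fin n) (MvPowerSeries (Fin n) k) :=
  ∑ α ∈ p.support.filter (fun α => degOf n α = ordOf n k p),
    MvPolynomial.monomial α (p α)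

/-- The reduction `σ'(P) = Σ_{|α| = ord P} p_α(0) ξ^α ∈ k[ξ₁,…,ξₙ]` of the principal
symbol modulo the maximal ideal `(x₁,…,xₙ)`. -/
def symbol0 (p : (Fin n →₀ ℕ) →₀ MvPowerSeries (Fin n) k) : MvPolynomial (Fin n) k :=
  ∑ α ∈ p.support.filter (fun α => degOf n α = ordOf n k p),
    MvPolynomial.monomial α (MvPowerSeries.constantCoeff (p α))


/-!
Each `Pᵢ` is a nonzero operator (applied to `x^α`, for `α` minimal in its support, it gives
`α! • p_α`), so the reduced symbols `σ'(Pᵢ)` lie in `S`. They are homogeneous of positive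
degree, and reducing the hypothesis on the characteristic divisors modulo `(x₁,…,xₙ)` puts a
power of every `ξⱼ` in the ideal they generate. For `M` large, `ξⱼ^M = Σᵢ gⱼᵢ σ'(Pᵢ)` with
`gⱼᵢ` homogeneous of degree `M - ord Pᵢ < M`, so a monomial with some exponent `≥ M` is an
`S`-combination of monomials of lower degree. By induction on the degree, the finitely many
monomials with all exponents `< M` generate `k[ξ₁,…,ξₙ]` over `S`.
-/

namespace MvPolynomial

variable {σ R : Type*} [CommSemiring R]

theorem IsHomogeneous.degree_eq_of_mem_support {φ : MvPolynomial σ R} {e : ℕ}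
    (hφ : φ.IsHomogeneous e) {δ : σ →₀ ℕ} (hδ : δ ∈ φ.support) : δ.degree = e := by
  rw [Finsupp.degree_eq_weight_one]
  exact hφ (mem_support_iff.mp hδ)

section
attribute [local instance] gradedAlgebra

theorem homogeneousComponent_mul_of_isHomogeneous_right {f : MvPolynomial σ R} {d D : ℕ}
    (hf : f.IsHomogeneous d) (hdD : d ≤ D) (g : MvPolynomial σ R) :
    homogeneousComponent D (g * f) = homogeneousComponent (D - d) g * f := by
  rw [← decomposition.decompose'_apply, ← decomposition.decompose'_apply]
  exact DirectSum.coe_decompose_mul_of_right_mem_of_le (homogeneousSubmodule σ R) hf hdD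

end

theorem exists_isHomogeneous_coeffs_of_mem_span {ι : Type*} [Fintype ι]
    {f : ι → MvPolynomial σ R} {d : ι → ℕ} (hf : ∀ i, (f i).IsHomogeneous (d i))
    {D : ℕ} (hdD : ∀ i, d i ≤ D) {q : MvPolynomial σ R} (hq : q.IsHomogeneous D)
    (hmem : q ∈ Ideal.span (Set.range f)) :
    ∃ g : ι → MvPolynomial σ R, (∀ i, (g i).IsHomogeneous (D - d i)) ∧ q = ∑ i, g i * f i := by
  obtain ⟨c, rfl⟩ := (Submodule.mem_span_range_iff_exists_fun _).mp hmem
  refine ⟨fun i => homogeneousComponent (D - d i) (c i),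
    fun i => homogeneousComponent_isHomogeneous _ _, ?_⟩
  calc ∑ i, c i • f i = homogeneousComponent D (∑ i, c i • f i) := by
        rw [homogeneousComponent_of_mem hq, if_pos rfl]
    _ = ∑ i, homogeneousComponent (D - d i) (c i) * f i := by
        rw [map_sum]
        exact Finset.sum_congr rfl fun i _ =>
          homogeneousComponent_mul_of_isHomogeneous_right (hf i) (hdD i) _

theorem mem_of_forall_monomial_one_mem {A : Type*} [Semiring A] [SMul R A]
    [Module A (MvPolynomial σ R)] [IsScalarTower R A (MvPolynomial σ R)]
    {N : Submodule A (MvPolynomial σ R)} (q : MvPolynomial σ R)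
    (h : ∀ δ ∈ q.support, monomial δ (1 : R) ∈ N) : q ∈ N := by
  rw [q.as_sum]
  refine Submodule.sum_mem _ fun δ hδ => ?_
  simpa [smul_monomial] using N.smul_of_tower_mem (coeff δ q) (h δ hδ)

theorem monomial_one_mem_span_of_forall_lt {ι : Type*} [Fintype ι]
    (S : Subalgebra R (MvPolynomial σ R)) {f : ι → MvPolynomial σ R} {d : ι → ℕ}
    (hf : ∀ i, (f i).IsHomogeneous (d i)) (hd : ∀ i, 0 < d i) (hfS : ∀ i, f i ∈ S)
    {M : ℕ} (hdM : ∀ i, d i ≤ M) (hXM : ∀ j, X j ^ M ∈ Ideal.span (Set.range f))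
    (γ : σ →₀ ℕ) :
    monomial γ (1 : R) ∈
      Submodule.span S ((monomial · 1) '' {γ : σ →₀ ℕ | ∀ j, γ j < M}) := by
  choose g hg hgX using fun j =>
    exists_isHomogeneous_coeffs_of_mem_span hf hdM (isHomogeneous_X_pow j M) (hXM j)
  induction hD : γ.degree using Nat.strong_induction_on generalizing γ with
  | _ D ih =>
  by_cases hbox : ∀ j, γ j < M
  · exact Submodule.subset_span ⟨γ, hbox, rfl⟩
  push Not at hbox
  obtain ⟨j, hj⟩ := hbox
  obtain ⟨γ, rfl⟩ : ∃ γ', γ = γ' + Finsupp.single j M :=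
    ⟨_, (tsub_add_cancel_of_le (Finsupp.single_le_iff.mpr hj)).symm⟩
  have hsplit : monomial (γ + Finsupp.single j M) (1 : R) = monomial γ 1 * X j ^ M := by
    rw [X_pow_eq_monomial, monomial_mul, mul_one]
  rw [hsplit, hgX j, Finset.mul_sum]
  refine Submodule.sum_mem _ fun i _ => ?_
  have hlower : monomial γ (1 : R) * g j i ∈
      Submodule.span S ((monomial · 1) '' {γ : σ →₀ ℕ | ∀ j, γ j < M}) := by
    refine mem_of_forall_monomial_one_mem _ fun δ hδ => ?_
    refine ih δ.degree ?_ δ rfl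
    rw [((isHomogeneous_monomial _ rfl).mul (hg j i)).degree_eq_of_mem_support hδ, ← hD,
      map_add, Finsupp.degree_single]
    have := hd i; have := hdM i; omega
  rw [← mul_assoc, mul_comm]
  exact Submodule.smul_mem _ (⟨f i, hfS i⟩ : S) hlower

theorem finite_of_isHomogeneous_of_span_X_le_radical [Fintype σ] {ι : Type*} [Fintype ι]
    (S : Subalgebra R (MvPolynomial σ R)) {f : ι → MvPolynomial σ R} {d : ι → ℕ}
    (hf : ∀ i, (f i).IsHomogeneous (d i)) (hd : ∀ i, 0 < d i) (hfS : ∀ i, f i ∈ S)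
    (hrad : Ideal.span (Set.range X) ≤ (Ideal.span (Set.range f)).radical) :
    Module.Finite S (MvPolynomial σ R) := by
  obtain ⟨K, hK⟩ :=
    Ideal.exists_pow_le_of_le_radical_of_fg hrad (Submodule.fg_span (Set.finite_range X))
  set M := K + ∑ i, d i
  have hdM : ∀ i, d i ≤ M := fun i =>
    (Finset.single_le_sum (fun _ _ => Nat.zero_le _) (Finset.mem_univ i)).trans
      (Nat.le_add_left _ _)
  have hXM : ∀ j, X j ^ M ∈ Ideal.span (Set.range f) := fun j =>
    (Ideal.span _).pow_mem_of_pow_mem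
      (hK (Ideal.pow_mem_pow (Ideal.subset_span (Set.mem_range_self j)) K)) (Nat.le_add_right _ _)
  have hbox : {γ : σ →₀ ℕ | ∀ j, γ j < M}.Finite :=
    (Set.Finite.pi fun _ => Set.finite_Iio M).preimage DFunLike.coe_injective.injOn
      |>.subset fun γ hγ j _ => hγ j
  refine ⟨Submodule.fg_def.mpr ⟨_, hbox.image (monomial · (1 : R)), eq_top_iff.mpr fun q _ =>
    mem_of_forall_monomial_one_mem q fun γ _ => ?_⟩⟩
  exact monomial_one_mem_span_of_forall_lt S hf hd hfS hdM hXM γ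

end MvPolynomial

section

omit [CharZero k]

theorem coeff_derivOp (i : Fin n) (f : MvPowerSeries (Fin n) k) (m : Fin n →₀ ℕ) :
    MvPowerSeries.coeff m (derivOp n k i f) =
      ((m i : k) + 1) * MvPowerSeries.coeff (m + Finsupp.single i 1) f :=
  rfl

theorem coeff_derivOp_pow (i : Fin n) (e : ℕ) (f : MvPowerSeries (Fin n) k)
    (m : Fin n →₀ ℕ) :
    MvPowerSeries.coeff m ((derivOp n k i ^ e) f) =
      ((m i + e).descFactorial e : k) * MvPowerSeries.coeff (m + Finsupp.single i e) f := by
  induction e generalizing f with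
  | zero => simp
  | succ e ih =>
    rw [pow_succ, Module.End.mul_apply, ih, coeff_derivOp, Finsupp.add_apply,
      Finsupp.single_eq_same, add_assoc m, ← Finsupp.single_add, ← add_assoc (m i),
      Nat.succ_descFactorial_succ]
    push_cast
    ring

theorem coeff_map_derivOp_pow_prod (α : Fin n →₀ ℕ) (f : MvPowerSeries (Fin n) k)
    {L : List (Fin n)} (hL : L.Nodup) (m : Fin n →₀ ℕ) :
    MvPowerSeries.coeff m ((L.map fun i => derivOp n k i ^ α i).prod f) =
      (L.map fun i => ((m i + α i).descFactorial (α i) : k)).prod *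
        MvPowerSeries.coeff (m + (L.map fun i => Finsupp.single i (α i)).sum) f := by
  induction L generalizing m with
  | nil => simp
  | cons i L ih =>
    obtain ⟨hiL, hL⟩ := List.nodup_cons.mp hL
    have hshift : ∀ j ∈ L, (m + Finsupp.single i (α i)) j = m j := fun j hj => by
      simp [Finsupp.single_eq_of_ne (ne_of_mem_of_not_mem hj hiL)]
    rw [List.map_cons, List.prod_cons, Module.End.mul_apply, coeff_derivOp_pow, ih hL,
      List.map_congr_left fun j hj => by rw [hshift j hj]]
    simp only [List.map_cons, List.prod_cons, List.sum_cons, add_assoc, mul_assoc]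

theorem coeff_ofFn_derivOp_pow_prod (α : Fin n →₀ ℕ) (f : MvPowerSeries (Fin n) k)
    (m : Fin n →₀ ℕ) :
    MvPowerSeries.coeff m ((List.ofFn fun i => derivOp n k i ^ α i).prod f) =
      (∏ i, ((m i + α i).descFactorial (α i) : k)) * MvPowerSeries.coeff (m + α) f := by
  rw [List.ofFn_eq_map, coeff_map_derivOp_pow_prod n k α f (List.nodup_finRange n),
    ← List.ofFn_eq_map, ← List.ofFn_eq_map, List.prod_ofFn, List.sum_ofFn,
    Finsupp.univ_sum_single]

theorem ofFn_derivOp_pow_prod_monomial_of_not_le {α β : Fin n →₀ ℕ} (h : ¬β ≤ α) (c : k) :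
    (List.ofFn fun i => derivOp n k i ^ β i).prod (MvPowerSeries.monomial α c) = 0 := by
  ext m
  rw [coeff_ofFn_derivOp_pow_prod, MvPowerSeries.coeff_monomial,
    if_neg fun hm : m + β = α => h (hm ▸ le_add_self), mul_zero, map_zero]

theorem ofFn_derivOp_pow_prod_monomial_self (α : Fin n →₀ ℕ) :
    (List.ofFn fun i => derivOp n k i ^ α i).prod (MvPowerSeries.monomial α 1) =
      (∏ i, ((α i).factorial : k)) • 1 := by
  ext m
  rw [coeff_ofFn_derivOp_pow_prod, MvPowerSeries.coeff_monomial, MvPowerSeries.coeff_smul,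
    MvPowerSeries.coeff_one]
  by_cases hm : m = 0
  · simp [hm, Nat.descFactorial_self]
  · simp [hm]

theorem toOp_monomial_of_minimal {p : (Fin n →₀ ℕ) →₀ MvPowerSeries (Fin n) k}
    {α : Fin n →₀ ℕ} (hα : Minimal (· ∈ p.support) α) :
    toOp n k p (MvPowerSeries.monomial α 1) = (∏ i, ((α i).factorial : k)) • p α := by
  rw [toOp, Finsupp.sum, LinearMap.sum_apply,
    Finset.sum_eq_single_of_mem α hα.1 fun β hβ hne => ?_]
  · rw [Module.End.mul_apply, ofFn_derivOp_pow_prod_monomial_self, map_smul]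
    exact congrArg _ (mul_one _)
  · rw [Module.End.mul_apply, ofFn_derivOp_pow_prod_monomial_of_not_le n k
      (fun hle => hne (le_antisymm hle (hα.2 hβ hle))), map_zero]

theorem symbol0_isHomogeneous (p : (Fin n →₀ ℕ) →₀ MvPowerSeries (Fin n) k) :
    (symbol0 n k p).IsHomogeneous (ordOf n k p) :=
  MvPolynomial.IsHomogeneous.sum _ _ _ fun _ hα =>
    MvPolynomial.isHomogeneous_monomial _ (Finset.mem_filter.mp hα).2

theorem map_constantCoeff_symbolFull (p : (Fin n →₀ ℕ) →₀ MvPowerSeries (Fin n) k) :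
    MvPolynomial.map MvPowerSeries.constantCoeff (symbolFull n k p) = symbol0 n k p := by
  rw [symbolFull, symbol0, map_sum]
  exact Finset.sum_congr rfl fun α _ => MvPolynomial.map_monomial _ _ _

theorem span_X_le_radical_span_symbol0 {ι : Type*}
    (P : ι → ((Fin n →₀ ℕ) →₀ MvPowerSeries (Fin n) k))
    (h : Ideal.span (Set.range MvPolynomial.X) ≤
      (Ideal.span (Set.range fun i => symbolFull n k (P i))).radical) :
    Ideal.span (Set.range MvPolynomial.X) ≤
      (Ideal.span (Set.range fun i => symbol0 n k (P i))).radical := by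
  set φ := MvPolynomial.map (σ := Fin n) (MvPowerSeries.constantCoeff (σ := Fin n) (R := k))
  calc Ideal.span (Set.range MvPolynomial.X)
      = (Ideal.span (Set.range MvPolynomial.X)).map φ := by
        rw [Ideal.map_span, ← Set.range_comp]
        simp only [Function.comp_def, φ, MvPolynomial.map_X]
    _ ≤ ((Ideal.span (Set.range fun i => symbolFull n k (P i))).radical).map φ :=
        Ideal.map_mono h
    _ ≤ ((Ideal.span (Set.range fun i => symbolFull n k (P i))).map φ).radical :=
        Ideal.map_radical_le φ
    _ = (Ideal.span (Set.range fun i => symbol0 n k (P i))).radical := by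
        rw [Ideal.map_span, ← Set.range_comp]
        simp only [Function.comp_def, φ, map_constantCoeff_symbolFull]

end

theorem toOp_ne_zero {p : (Fin n →₀ ℕ) →₀ MvPowerSeries (Fin n) k} (hp : p ≠ 0) :
    toOp n k p ≠ 0 := by
  obtain ⟨α, hα⟩ := exists_minimal_of_wellFoundedLT (· ∈ p.support)
    (Finsupp.support_nonempty_iff.mpr hp)
  have hfact : (∏ i, ((α i).factorial : k)) ≠ 0 :=
    Finset.prod_ne_zero_iff.mpr fun i _ => Nat.cast_ne_zero.mpr (Nat.factorial_ne_zero _)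
  intro h
  have := toOp_monomial_of_minimal n k hα
  rw [h] at this
  exact smul_ne_zero hfact (Finsupp.mem_support_iff.mp hα.1) this.symm

theorem statement2_general (n : ℕ) (k : Type) [Field k] [CharZero k]
    (P : Fin n → ((Fin n →₀ ℕ) →₀ MvPowerSeries (Fin n) k))
    (hord : ∀ i, 0 < ordOf n k (P i))
    (hchar : Ideal.span (Set.range
        (MvPolynomial.X : Fin n → MvPolynomial (Fin n) (MvPowerSeries (Fin n) k)))
      ≤ (Ideal.span (Set.range fun i => symbolFull n k (P i))).radical)
    (B : Type) [CommRing B] [Algebra k B]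
    (ι : B →ₐ[k] Module.End k (MvPowerSeries (Fin n) k))
    (hPB : ∀ i, toOp n k (P i) ∈ ι.range)
    (S : Subalgebra k (MvPolynomial (Fin n) k))
    (hS : S = Algebra.adjoin k
      {q : MvPolynomial (Fin n) k | ∃ b : B, b ≠ 0 ∧ ∃ p, toOp n k p = ι b ∧ symbol0 n k p = q}) :
    Module.Finite S (MvPolynomial (Fin n) k) := by
  have hsymbol_mem : ∀ i, symbol0 n k (P i) ∈ S := fun i => by
    obtain ⟨b, hb⟩ := hPB i
    have hP : P i ≠ 0 := fun hP => by simpa [hP, ordOf] using hord i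
    have hb0 : b ≠ 0 := by
      rintro rfl
      exact toOp_ne_zero n k hP (by rw [← hb, map_zero])
    rw [hS]
    exact Algebra.subset_adjoin ⟨b, hb0, P i, hb.symm, rfl⟩
  exact MvPolynomial.finite_of_isHomogeneous_of_span_X_le_radical S
    (fun i => symbol0_isHomogeneous n k (P i)) hord hsymbol_mem
    (span_X_le_radical_span_symbol0 n k P hchar)

/-- The polynomial ring `k[ξ₁,…,ξₙ]` is a finitely generated module
over the `k`-subalgebra `S` generated by the reduced principal symbols `σ'(Q)` of the
nonzero elements `Q` of `B`. -/
theorem statement2 (n : ℕ) (k : Type) [Field k] [CharZero k]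
    (P : Fin n → ((Fin n →₀ ℕ) →₀ MvPowerSeries (Fin n) k))
    (hcomm : ∀ i j, toOp n k (P i) * toOp n k (P j) = toOp n k (P j) * toOp n k (P i))
    (hord : ∀ i, 0 < ordOf n k (P i))
    (hchar : Ideal.span (Set.range
        (MvPolynomial.X : Fin n → MvPolynomial (Fin n) (MvPowerSeries (Fin n) k)))
      ≤ (Ideal.span (Set.range fun i => symbolFull n k (P i))).radical)
    (B : Type) [CommRing B] [Algebra k B]
    (ι : B →ₐ[k] Module.End k (MvPowerSeries (Fin n) k))
    (hinj : Function.Injective ι)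
    (hBD : ∀ b : B, ∃ p, toOp n k p = ι b)
    (hPB : ∀ i, toOp n k (P i) ∈ ι.range)
    (S : Subalgebra k (MvPolynomial (Fin n) k))
    (hS : S = Algebra.adjoin k
      {q : MvPolynomial (Fin n) k | ∃ b : B, b ≠ 0 ∧ ∃ p, toOp n k p = ι b ∧ symbol0 n k p = q}) :
    Module.Finite S (MvPolynomial (Fin n) k) :=
  statement2_general n k P hord hchar B ι hPB S hS

end
end

section
/- Let R ⊆ Ã be integral domains which are finitely generated algebras over a field k, with Krull dimension of R equal to 1 and Krull dimension of Ã equal to 2, and let I be an ideal of Ã such that the composite map R → Ã → Ã/I is injective and makes Ã/I a finitely generated R-module. Then the subring A = R + I of Ã is a finitely generated k-algebra, and Ã is a finitely generated A-module. -/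
/-!
Lifts of `R`-module generators of `Ã/I`, together with `1`, generate `Ã` as an `A`-module:
modulo `I` every element is an `R`-combination of the lifts, and the error term lies in
`I ⊆ A`, hence is an `A`-multiple of `1`. Since `Ã` is then finite over `A` and of finite
type over the Noetherian ring `k`, the Artin–Tate lemma makes `A` of finite type over `k`.
-/

theorem Subalgebra.module_finite_of_finite_quotient {k B : Type*} [CommRing k] [CommRing B]
    [Algebra k B] {R A : Subalgebra k B} {I : Ideal B} (hRA : R ≤ A) (hIA : (I : Set B) ⊆ A)
    [Module.Finite R (B ⧸ I)] : Module.Finite A B := by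
  classical
  obtain ⟨s, hs⟩ := Module.Finite.fg_top (R := R) (M := B ⧸ I)
  choose lift hlift using Ideal.Quotient.mk_surjective (I := I)
  let M : Submodule A B := Submodule.span A ↑(insert 1 (s.image lift))
  have hIM : ∀ y ∈ I, y ∈ M := fun y hy => by
    simpa [Subalgebra.smul_def] using
      M.smul_mem (⟨y, hIA hy⟩ : A) (Submodule.subset_span (by simp : (1 : B) ∈ _))
  have hlifts : ∀ z ∈ Submodule.span R (s : Set (B ⧸ I)), ∃ m ∈ M, Ideal.Quotient.mk I m = z := by
    intro z hz
    induction hz using Submodule.span_induction with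
    | mem z hz => exact ⟨lift z, Submodule.subset_span (by simpa using .inr ⟨z, hz, rfl⟩), hlift z⟩
    | zero => exact ⟨0, M.zero_mem, map_zero _⟩
    | add z w _ _ hz hw =>
      obtain ⟨m, hm, rfl⟩ := hz
      obtain ⟨n, hn, rfl⟩ := hw
      exact ⟨m + n, M.add_mem hm hn, map_add _ _ _⟩
    | smul r z _ hz =>
      obtain ⟨m, hm, rfl⟩ := hz
      exact ⟨(⟨r, hRA r.2⟩ : A) • m, M.smul_mem _ hm, map_smul (Ideal.Quotient.mkₐ R I) r m⟩
  refine ⟨⟨insert 1 (s.image lift), eq_top_iff.2 fun x _ => ?_⟩⟩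
  obtain ⟨m, hm, hmx⟩ := hlifts (Ideal.Quotient.mk I x) (hs ▸ Submodule.mem_top)
  have hxm : x - m ∈ I := Ideal.Quotient.eq.1 hmx.symm
  exact sub_add_cancel x m ▸ M.add_mem (hIM _ hxm) hm

theorem Subalgebra.finiteType_of_module_finite {k C : Type*} [CommRing k] [IsNoetherianRing k]
    [CommRing C] [Algebra k C] [Algebra.FiniteType k C] (A : Subalgebra k C)
    [Module.Finite A C] : Algebra.FiniteType k A :=
  ⟨fg_of_fg_of_fg k A C Algebra.FiniteType.out Module.Finite.fg_top Subtype.val_injective⟩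

theorem statement9_general (k : Type) [Field k]
    (Atilde : Type) [CommRing Atilde] [Algebra k Atilde]
    (hAfg : Algebra.FiniteType k Atilde)
    (R : Subalgebra k Atilde)
    (I : Ideal Atilde)
    (hfinquot : Module.Finite R (Atilde ⧸ I))
    (A : Subalgebra k Atilde)
    (hA : ∀ x : Atilde, x ∈ A ↔ ∃ r ∈ R, ∃ y ∈ I, x = r + y) :
    Algebra.FiniteType k A ∧ Module.Finite A Atilde := by
  have hRA : R ≤ A := fun r hr => (hA r).2 ⟨r, hr, 0, I.zero_mem, (add_zero r).symm⟩
  have hIA : (I : Set Atilde) ⊆ A := fun y hy => (hA y).2 ⟨0, R.zero_mem, y, hy, (zero_add y).symm⟩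
  have : Module.Finite A Atilde := Subalgebra.module_finite_of_finite_quotient hRA hIA
  exact ⟨A.finiteType_of_module_finite, this⟩

/-- Lemma on glueing. -/
theorem statement9 (k : Type) [Field k]
    (Atilde : Type) [CommRing Atilde] [IsDomain Atilde] [Algebra k Atilde]
    (hAfg : Algebra.FiniteType k Atilde)
    (hAdim : ringKrullDim Atilde = 2)
    (R : Subalgebra k Atilde)
    (hRfg : Algebra.FiniteType k R)
    (hRdim : ringKrullDim R = 1)
    (I : Ideal Atilde)
    (hinj : Function.Injective
      ((Ideal.Quotient.mk I).comp (R.subtype : R →+* Atilde)))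
    (hfinquot : Module.Finite R (Atilde ⧸ I))
    (A : Subalgebra k Atilde)
    (hA : ∀ x : Atilde, x ∈ A ↔ ∃ r ∈ R, ∃ y ∈ I, x = r + y) :
    Algebra.FiniteType k A ∧ Module.Finite A Atilde :=
  statement9_general k Atilde hAfg R I hfinquot A hA
end

section
/- Assume the Krull dimension of A is strictly greater than 1. Then A' = A if and only if A satisfies (S₂), i.e. if and only if depth(A_p) ≥ min(2, ht(p)) for every prime ideal p of A. -/
/-!
Both sides are equivalent to: for `b ≠ 0`, every associated prime `P` of `A ⧸ (b)` has
height one.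

If `P = ((b) : c)` had height at least two, then `c / b ∉ A` would lie in every `A_q` with
`ht q = 1`, since `P ⊄ q`. Conversely, if `a / b ∉ A`, an associated prime of `A ⧸ (b)`
containing `((b) : a)` is a prime of height one with `a / b ∉ A_P`.

`P A_P` is associated to `A_P ⧸ (b)` exactly when `P` is associated to `A ⧸ (b)`. If so, with
`P A_P = ((b) : c)`, a regular sequence `r₀, r₁` in `P A_P` would force `b ∣ c`; if not, prime
avoidance gives `t ∈ P A_P` regular on `A_P ⧸ (b)`, and `b, t` is a regular sequence.
-/

/-- `P` is a prime ideal of height one: it is prime, there is a chain `q < P` of primes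
below it, but no chain `q₁ < q₂ < P` of primes below it. -/
def HeightOneIdeal {S : Type*} [CommRing S] (P : Ideal S) : Prop :=
  P.IsPrime ∧ (∃ q : Ideal S, q.IsPrime ∧ q < P) ∧
    ¬ ∃ q₁ q₂ : Ideal S, q₁.IsPrime ∧ q₂.IsPrime ∧ q₁ < q₂ ∧ q₂ < P

/-- `x ∈ A_p ⊆ K` for every height-one prime `p` of `A`, i.e. `x ∈ A'`. -/
def MemHtOneLoc (A : Type*) [CommRing A] (K : Type*) [CommRing K] [Algebra A K]
    (x : K) : Prop :=
  ∀ p : Ideal A, HeightOneIdeal p →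
    ∃ a s : A, s ∉ p ∧ x * algebraMap A K s = algebraMap A K a

/-- `r` is a regular sequence on `S` contained in the ideal `I`: each `r i` lies in `I`
and is a nonzerodivisor modulo the ideal generated by the previous terms. -/
def IsRegSeq {S : Type*} [CommRing S] (I : Ideal S) {d : ℕ} (r : Fin d → S) : Prop :=
  (∀ i, r i ∈ I) ∧ ∀ (i : Fin d) (x : S),
    r i * x ∈ Ideal.span {y : S | ∃ j : Fin d, j < i ∧ y = r j} →
    x ∈ Ideal.span {y : S | ∃ j : Fin d, j < i ∧ y = r j}

/-- Serre's condition `(S₂)`: for every prime `p` of `A`, the depth of the local ring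
`A_p` is at least `min(2, ht p)`; heights are expressed by chains of primes and depth
by the existence of regular sequences in the maximal ideal `p·A_p` of `A_p`. -/
def SerreS2 (A : Type*) [CommRing A] : Prop :=
  ∀ (p : Ideal A) (hp : p.IsPrime),
    ((∃ q : Ideal A, q.IsPrime ∧ q < p) →
      ∃ r : Fin 1 → Localization (@Ideal.primeCompl A _ p hp),
        IsRegSeq (p.map (algebraMap A (Localization (@Ideal.primeCompl A _ p hp)))) r) ∧
    ((∃ q₁ q₂ : Ideal A, q₁.IsPrime ∧ q₂.IsPrime ∧ q₁ < q₂ ∧ q₂ < p) →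
      ∃ r : Fin 2 → Localization (@Ideal.primeCompl A _ p hp),
        IsRegSeq (p.map (algebraMap A (Localization (@Ideal.primeCompl A _ p hp)))) r)

open IsLocalRing

section RegularSequences

variable {S : Type*} [CommRing S] {I : Ideal S}

lemma isRegSeq_one_iff {r : Fin 1 → S} :
    IsRegSeq I r ↔ r 0 ∈ I ∧ ∀ x, r 0 * x = 0 → x = 0 := by
  have h₀ : {y : S | ∃ j : Fin 1, j < 0 ∧ y = r j} = ∅ := by ext; simp
  simp only [IsRegSeq, Fin.forall_fin_one, h₀, Ideal.span_empty, Ideal.mem_bot]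

lemma isRegSeq_two_iff {r : Fin 2 → S} :
    IsRegSeq I r ↔ (r 0 ∈ I ∧ r 1 ∈ I) ∧ (∀ x, r 0 * x = 0 → x = 0) ∧
      ∀ x, r 1 * x ∈ Ideal.span {r 0} → x ∈ Ideal.span {r 0} := by
  have h₀ : {y : S | ∃ j : Fin 2, j < 0 ∧ y = r j} = ∅ := by ext; simp
  have h₁ : {y : S | ∃ j : Fin 2, j < 1 ∧ y = r j} = {r 0} := by ext; simp [Fin.lt_one_iff]
  simp only [IsRegSeq, Fin.forall_fin_two, h₀, h₁, Ideal.span_empty, Ideal.mem_bot]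

lemma IsRegSeq.not_forall_dvd_mul {r : Fin 2 → S} (hr : IsRegSeq I r) {a c : S}
    (ha : IsLeftRegular a) (hc : ¬ a ∣ c) : ¬ ∀ y ∈ I, a ∣ y * c := by
  intro hIc
  obtain ⟨⟨hr₀, hr₁⟩, hreg₀, hreg₁⟩ := isRegSeq_two_iff.mp hr
  obtain ⟨d₀, hd₀⟩ := hIc _ hr₀
  obtain ⟨d₁, hd₁⟩ := hIc _ hr₁
  have hswap : r 1 * d₀ = r 0 * d₁ := ha (by linear_combination r 0 * hd₁ - r 1 * hd₀)
  obtain ⟨e, he⟩ := Ideal.mem_span_singleton'.mp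
    (hreg₁ d₀ (Ideal.mem_span_singleton'.mpr ⟨d₁, by rw [hswap, mul_comm]⟩))
  have hce : c - a * e = 0 := hreg₀ _ (by linear_combination hd₀ - a * he)
  exact hc ⟨e, sub_eq_zero.mp hce⟩

end RegularSequences

section AssociatedPrimes

variable {R : Type*} [CommRing R]

lemma smul_mk_span_singleton_eq_zero_iff {b c r : R} :
    r • Ideal.Quotient.mk (Ideal.span {b}) c = 0 ↔ b ∣ r * c := by
  rw [Algebra.smul_def, Ideal.Quotient.algebraMap_eq, ← map_mul, Ideal.Quotient.eq_zero_iff_mem,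
    Ideal.mem_span_singleton]

lemma mem_associatedPrimes_quotient_span_singleton_iff [IsNoetherianRing R] {P : Ideal R}
    {b : R} :
    P ∈ associatedPrimes R (R ⧸ Ideal.span {b}) ↔
      P.IsPrime ∧ ∃ c : R, ∀ r, r ∈ P ↔ b ∣ r * c := by
  rw [AssociatedPrimes.mem_iff, isAssociatedPrime_iff]
  refine and_congr_right fun _ => ⟨?_, ?_⟩
  · rintro ⟨x, rfl⟩
    obtain ⟨c, rfl⟩ := Ideal.Quotient.mk_surjective x
    exact ⟨c, fun r => by
      rw [Submodule.mem_colon_singleton, Submodule.mem_bot, smul_mk_span_singleton_eq_zero_iff]⟩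
  · rintro ⟨c, hc⟩
    refine ⟨Ideal.Quotient.mk _ c, Ideal.ext fun r => ?_⟩
    rw [hc, Submodule.mem_colon_singleton, Submodule.mem_bot, smul_mk_span_singleton_eq_zero_iff]

lemma mem_associatedPrimes_atPrime_quotient_iff [IsNoetherianRing R] (P : Ideal R) [P.IsPrime]
    (b : R) :
    maximalIdeal (Localization.AtPrime P) ∈ associatedPrimes (Localization.AtPrime P)
        (Localization.AtPrime P ⧸ Ideal.span {algebraMap R (Localization.AtPrime P) b}) ↔
      P ∈ associatedPrimes R (R ⧸ Ideal.span {b}) := by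
  rw [← Set.image_singleton, ← Ideal.map_span,
    ← Ideal.localized'_eq_map (Localization.AtPrime P) P.primeCompl,
    ← Module.associatedPrimes.preimage_comap_associatedPrimes_eq_associatedPrimes_of_isLocalizedModule
      P.primeCompl _ ((Ideal.span {b}).toLocalizedQuotient' (Localization.AtPrime P) P.primeCompl
        (Algebra.linearMap R (Localization.AtPrime P))),
    Set.mem_preimage]
  exact Iff.of_eq (congrArg _ Localization.AtPrime.under_maximalIdeal)

lemma IsLocalRing.exists_isRegSeq_two [IsNoetherianRing R] [IsLocalRing R] {b : R}
    (hbm : b ∈ maximalIdeal R) (hb : IsLeftRegular b)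
    (hass : maximalIdeal R ∉ associatedPrimes R (R ⧸ Ideal.span {b})) :
    ∃ r : Fin 2 → R, IsRegSeq (maximalIdeal R) r := by
  obtain ⟨t, htm, ht⟩ : ∃ t ∈ maximalIdeal R,
      ∀ x : R ⧸ Ideal.span {b}, t • x = 0 → x = 0 := by
    -- otherwise prime avoidance puts the maximal ideal inside an associated prime
    by_contra! h
    have hzd : (maximalIdeal R : Set R) ⊆ ⋃ Q ∈ associatedPrimes R (R ⧸ Ideal.span {b}), Q := by
      rw [biUnion_associatedPrimes_eq_zero_divisors]
      intro t ht
      obtain ⟨x, hx, hx0⟩ := h t ht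
      exact ⟨x, hx0, hx⟩
    obtain ⟨Q, hQ, hmQ⟩ := (Ideal.subset_union_prime_finite (associatedPrimes.finite _ _) ⊥ ⊥
      fun Q hQ _ _ => AssociatedPrimes.mem_iff.mp hQ |>.isPrime).mp hzd
    have hQm : Q = maximalIdeal R :=
      ((maximalIdeal.isMaximal R).eq_of_le (AssociatedPrimes.mem_iff.mp hQ).isPrime.ne_top hmQ).symm
    exact hass (hQm ▸ hQ)
  refine ⟨![b, t], isRegSeq_two_iff.mpr ⟨⟨hbm, htm⟩, fun x hx => hb (by simpa using hx),
    fun x hx => ?_⟩⟩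
  have := ht _ (smul_mk_span_singleton_eq_zero_iff.mpr (Ideal.mem_span_singleton.mp hx))
  rwa [Ideal.Quotient.eq_zero_iff_mem] at this

end AssociatedPrimes

def AssociatedPrimesOfPrincipalHeightLeOne (A : Type*) [CommRing A] : Prop :=
  ∀ b : A, b ≠ 0 → ∀ P ∈ associatedPrimes A (A ⧸ Ideal.span {b}),
    ¬ ∃ q₁ q₂ : Ideal A, q₁.IsPrime ∧ q₂.IsPrime ∧ q₁ < q₂ ∧ q₂ < P

section NoetherianRing

variable {A : Type*} [CommRing A] [IsNoetherianRing A]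
  {K : Type*} [Field K] [Algebra A K] [IsFractionRing A K]

omit [IsNoetherianRing A] in
lemma mul_algebraMap_eq_algebraMap_iff {x : K} {b c : A} (hb : b ≠ 0)
    (hx : x * algebraMap A K b = algebraMap A K c) (s a : A) :
    x * algebraMap A K s = algebraMap A K a ↔ s * c = b * a := by
  have hb' : algebraMap A K b ≠ 0 := (map_ne_zero_iff _ (IsFractionRing.injective A K)).mpr hb
  rw [← (IsFractionRing.injective A K).eq_iff, map_mul, map_mul, ← hx, ← mul_left_inj' hb']
  constructor <;> intro h <;> linear_combination h

lemma associatedPrimesOfPrincipalHeightLeOne_of_forall_memHtOneLoc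
    (hA : ∀ x : K, MemHtOneLoc A K x → ∃ a : A, x = algebraMap A K a) :
    AssociatedPrimesOfPrincipalHeightLeOne A := by
  rintro b hb P hP ⟨q₁, q₂, hq₁, hq₂, h₁₂, h₂P⟩
  obtain ⟨hPp, c, hc⟩ := mem_associatedPrimes_quotient_span_singleton_iff.mp hP
  obtain ⟨x, hx⟩ : ∃ x : K, x * algebraMap A K b = algebraMap A K c :=
    ⟨algebraMap A K c / algebraMap A K b, div_mul_cancel₀ _
      ((map_ne_zero_iff _ (IsFractionRing.injective A K)).mpr hb)⟩
  have hxA' : MemHtOneLoc A K x := by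
    intro q hq
    obtain ⟨s, hsP, hsq⟩ : ∃ s ∈ P, s ∉ q := by
      by_contra! h
      exact hq.2.2 ⟨q₁, q₂, hq₁, hq₂, h₁₂, h₂P.trans_le h⟩
    obtain ⟨a, ha⟩ := (hc s).mp hsP
    exact ⟨a, s, hsq, (mul_algebraMap_eq_algebraMap_iff hb hx s a).mpr ha⟩
  obtain ⟨a, rfl⟩ := hA x hxA'
  have hca : 1 * c = b * a := (mul_algebraMap_eq_algebraMap_iff hb hx 1 a).mp (by simp)
  exact hPp.ne_top ((Ideal.eq_top_iff_one P).mpr ((hc 1).mpr ⟨a, hca⟩))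

variable [IsDomain A]

lemma exists_eq_algebraMap_of_memHtOneLoc (hA : AssociatedPrimesOfPrincipalHeightLeOne A)
    {x : K} (hx : MemHtOneLoc A K x) : ∃ a : A, x = algebraMap A K a := by
  obtain ⟨⟨c, b⟩, hcb⟩ := IsLocalization.surj (nonZeroDivisors A) x
  have hb : (b : A) ≠ 0 := nonZeroDivisors.ne_zero b.2
  by_cases hbc : (b : A) ∣ c
  · obtain ⟨a, hab⟩ := hbc
    have hxa := (mul_algebraMap_eq_algebraMap_iff hb hcb 1 a).mpr (by rw [one_mul, hab])
    exact ⟨a, by simpa using hxa⟩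
  · have hc0 : Ideal.Quotient.mk (Ideal.span {(b : A)}) c ≠ 0 := by
      rwa [Ne, Ideal.Quotient.eq_zero_iff_mem, Ideal.mem_span_singleton]
    obtain ⟨P, hP, hle⟩ := exists_le_isAssociatedPrime_of_isNoetherianRing A _ hc0
    have hmemP : ∀ s, (b : A) ∣ s * c → s ∈ P := fun s hs => hle <| by
      rwa [Submodule.mem_colon_singleton, Submodule.mem_bot, smul_mk_span_singleton_eq_zero_iff]
    have hbP : (b : A) ∈ P := hmemP _ (dvd_mul_right _ _)
    have hP₀ : ⊥ < P := bot_lt_iff_ne_bot.mpr ((Submodule.ne_bot_iff P).mpr ⟨b, hbP, hb⟩)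
    have hP₁ : HeightOneIdeal P := ⟨hP.isPrime, ⟨⊥, Ideal.isPrime_bot, hP₀⟩, hA b hb P hP⟩
    obtain ⟨a, s, hsP, hxs⟩ := hx P hP₁
    exact absurd (hmemP s ⟨a, (mul_algebraMap_eq_algebraMap_iff hb hcb s a).mp hxs⟩) hsP

lemma forall_memHtOneLoc_iff :
    (∀ x : K, MemHtOneLoc A K x → ∃ a : A, x = algebraMap A K a) ↔
      AssociatedPrimesOfPrincipalHeightLeOne A :=
  ⟨associatedPrimesOfPrincipalHeightLeOne_of_forall_memHtOneLoc,
    fun hA _ => exists_eq_algebraMap_of_memHtOneLoc hA⟩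

omit [IsNoetherianRing A] in
lemma isLeftRegular_algebraMap_atPrime (P : Ideal A) [P.IsPrime] {b : A} (hb : b ≠ 0) :
    IsLeftRegular (algebraMap A (Localization.AtPrime P) b) :=
  (IsRegular.of_ne_zero ((map_ne_zero_iff _
    (IsLocalization.injective _ P.primeCompl_le_nonZeroDivisors)).mpr hb)).left

lemma associatedPrimesOfPrincipalHeightLeOne_of_serreS2 (hA : SerreS2 A) :
    AssociatedPrimesOfPrincipalHeightLeOne A := by
  rintro b hb P hP hchain
  have hPp := (AssociatedPrimes.mem_iff.mp hP).isPrime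
  obtain ⟨r, hr⟩ := (hA P hPp).2 hchain
  rw [Localization.AtPrime.map_eq_maximalIdeal] at hr
  obtain ⟨-, c, hc⟩ := mem_associatedPrimes_quotient_span_singleton_iff.mp
    ((mem_associatedPrimes_atPrime_quotient_iff P b).mpr hP)
  refine hr.not_forall_dvd_mul (isLeftRegular_algebraMap_atPrime P hb) (fun hbc => ?_)
    fun y hy => (hc y).mp hy
  exact (maximalIdeal.isMaximal _).ne_top
    ((Ideal.eq_top_iff_one _).mpr ((hc 1).mpr (by rwa [one_mul])))

lemma serreS2_of_associatedPrimesOfPrincipalHeightLeOne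
    (hA : AssociatedPrimesOfPrincipalHeightLeOne A) : SerreS2 A := by
  intro P hP
  have exists_ne_zero : ∀ q : Ideal A, q < P → ∃ b ∈ P, b ≠ 0 := fun q hqP =>
    Submodule.exists_mem_ne_zero_of_ne_bot (ne_bot_of_gt hqP)
  have mem_maximalIdeal : ∀ b ∈ P, algebraMap A (Localization.AtPrime P) b ∈ maximalIdeal _ :=
    fun b hbP => Localization.AtPrime.map_eq_maximalIdeal (I := P) ▸ Ideal.mem_map_of_mem _ hbP
  rw [Localization.AtPrime.map_eq_maximalIdeal]
  refine ⟨fun ⟨q, _, hqP⟩ => ?_, fun ⟨q₁, q₂, hq₁, hq₂, h₁₂, h₂P⟩ => ?_⟩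
  · obtain ⟨b, hbP, hb0⟩ := exists_ne_zero q hqP
    refine ⟨![algebraMap A _ b], isRegSeq_one_iff.mpr ⟨mem_maximalIdeal b hbP, fun x hx => ?_⟩⟩
    exact isLeftRegular_algebraMap_atPrime P hb0 (by simpa using hx)
  · obtain ⟨b, hbP, hb0⟩ := exists_ne_zero q₂ h₂P
    refine IsLocalRing.exists_isRegSeq_two (mem_maximalIdeal b hbP)
      (isLeftRegular_algebraMap_atPrime P hb0) ?_
    rw [mem_associatedPrimes_atPrime_quotient_iff]
    exact fun hP' => hA b hb0 P hP' ⟨q₁, q₂, hq₁, hq₂, h₁₂, h₂P⟩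

lemma serreS2_iff : SerreS2 A ↔ AssociatedPrimesOfPrincipalHeightLeOne A :=
  ⟨associatedPrimesOfPrincipalHeightLeOne_of_serreS2,
    serreS2_of_associatedPrimesOfPrincipalHeightLeOne⟩

end NoetherianRing

theorem statement10_general (A : Type) [CommRing A] [IsDomain A] [IsNoetherianRing A] :
    (∀ x : FractionRing A, MemHtOneLoc A (FractionRing A) x →
      ∃ a : A, x = algebraMap A (FractionRing A) a) ↔ SerreS2 A :=
  forall_memHtOneLoc_iff.trans serreS2_iff.symm

/-- If `dim A > 1`, then `A' = A` if and only if `A` satisfies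
Serre's condition `(S₂)`. -/
theorem statement10 (A : Type) [CommRing A] [IsDomain A] [IsNoetherianRing A]
    (hdim : 1 < ringKrullDim A) :
    (∀ x : FractionRing A, MemHtOneLoc A (FractionRing A) x →
      ∃ a : A, x = algebraMap A (FractionRing A) a) ↔ SerreS2 A :=
  statement10_general A
end

section
/- Assume the Krull dimension of A is strictly greater than 1 and that A satisfies condition (*). Then for every intermediate ring B with A ⊆ B ⊆ Ā such that B is a Noetherian integral domain satisfying Serre's condition (S₂), one has A' ⊆ B. -/
/-!
Write `x ∈ A'` as `a / s`. If `x ∉ B`, then `a ∉ sB`, and since `B` is Noetherian the conductor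
`(sB : a)` lies in an associated prime `P = (sB : m)` of `B / sB`. A regular sequence of length two
in `P B_P` would force `m ∈ s B_P`, so `(S₂)` makes `P` a height-one prime. By going up and
incomparability it lies under a height-one prime of `Ā`, so by `(*)` it contracts to a height-one
prime `p` of `A`. Now `x ∈ A_p` gives `t ∈ A \ p` with `t x ∈ A`, i.e. `t ∈ (sB : a) ⊆ P`:
a contradiction.
-/

section Colon
variable {S : Type*} [CommRing S]

theorem Ideal.colon_bot_quotient_mk (I : Ideal S) (m : S) :
    (⊥ : Submodule S (S ⧸ I)).colon {Ideal.Quotient.mk I m} = I.colon {m} := by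
  ext r
  simp [Submodule.mem_colon_singleton, Algebra.smul_def, ← map_mul,
    Ideal.Quotient.eq_zero_iff_mem]

theorem Ideal.exists_isPrime_colon_singleton_ge [IsNoetherianRing S] {I : Ideal S} {a : S}
    (ha : a ∉ I) : ∃ m, I.colon {a} ≤ I.colon {m} ∧ (I.colon {m}).IsPrime := by
  obtain ⟨P, hP, hle⟩ := exists_le_isAssociatedPrime_of_isNoetherianRing S
    (Ideal.Quotient.mk I a) (by rwa [ne_eq, Ideal.Quotient.eq_zero_iff_mem])
  obtain ⟨hPprime, y, rfl⟩ := (isAssociatedPrime_iff).mp hP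
  obtain ⟨m, rfl⟩ := Ideal.Quotient.mk_surjective y
  simp only [Ideal.colon_bot_quotient_mk] at hle hPprime
  exact ⟨m, hle, hPprime⟩

theorem Ideal.map_colon_singleton_le {T : Type*} [CommRing T] (f : S →+* T) (I : Ideal S)
    (m : S) : (I.colon {m}).map f ≤ (I.map f).colon {f m} :=
  Ideal.map_le_iff_le_comap.mpr fun p hp => by
    simpa [Submodule.mem_colon_singleton, ← map_mul] using
      Ideal.mem_map_of_mem f (Submodule.mem_colon_singleton.mp hp)

theorem Ideal.algebraMap_notMem_map_localization_colon {I : Ideal S} {m : S}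
    [(I.colon {m}).IsPrime] :
    algebraMap S (Localization.AtPrime (I.colon {m})) m ∉ I.map (algebraMap S _) := by
  intro h
  obtain ⟨⟨⟨i, hi⟩, t⟩, hmt⟩ :=
    (IsLocalization.mem_map_algebraMap_iff (I.colon {m}).primeCompl _).mp h
  rw [← map_mul, IsLocalization.eq_iff_exists (I.colon {m}).primeCompl] at hmt
  obtain ⟨c, hc⟩ := hmt
  have : (c * t : S) ∈ I.colon {m} := by
    rw [Submodule.mem_colon_singleton, smul_eq_mul]
    convert I.mul_mem_left c hi using 1
    rw [← hc]; ring
  exact mul_mem c.2 t.2 this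

end Colon

namespace IsRegSeq
variable {L : Type*} [CommRing L] {I : Ideal L} {r : Fin 2 → L}

theorem eq_zero_of_head_mul_eq_zero (hr : IsRegSeq I r) {x : L} (hx : r 0 * x = 0) :
    x = 0 := by
  have hspan : Ideal.span {y : L | ∃ j : Fin 2, j < 0 ∧ y = r j} = ⊥ := by simp
  simpa [hspan] using hr.2 0 x (by simp [hx])

theorem mem_span_head_of_mul_mem (hr : IsRegSeq I r) {x : L}
    (hx : r 1 * x ∈ Ideal.span {r 0}) : x ∈ Ideal.span {r 0} := by
  have hspan : {y : L | ∃ j : Fin 2, j < 1 ∧ y = r j} = {r 0} := by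
    ext y
    simp [Fin.lt_one_iff]
  simpa [hspan] using hr.2 1 x (by rwa [hspan])

theorem mem_span_singleton_of_mul_mem {b m : L} (hr : IsRegSeq I r)
    (hb : b ∈ nonZeroDivisors L)
    (h0 : r 0 * m ∈ Ideal.span {b}) (h1 : r 1 * m ∈ Ideal.span {b}) :
    m ∈ Ideal.span {b} := by
  obtain ⟨c, hc⟩ := Ideal.mem_span_singleton'.mp h0
  obtain ⟨d, hd⟩ := Ideal.mem_span_singleton'.mp h1
  have hcd : r 1 * c = r 0 * d := by
    refine sub_eq_zero.mp ((mem_nonZeroDivisors_iff_right.mp hb) _ ?_)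
    linear_combination r 1 * hc - r 0 * hd
  obtain ⟨e, rfl⟩ := Ideal.mem_span_singleton'.mp
    (hr.mem_span_head_of_mul_mem
      (hcd ▸ Ideal.mul_mem_right d _ (Ideal.mem_span_singleton_self _)))
  have hm : m = e * b := sub_eq_zero.mp <| hr.eq_zero_of_head_mul_eq_zero <| by
    linear_combination -hc
  exact Ideal.mem_span_singleton'.mpr ⟨e, hm.symm⟩

end IsRegSeq

theorem SerreS2.heightOneIdeal_of_isPrime_colon {S : Type*} [CommRing S] [IsDomain S]
    (hS : SerreS2 S) {b m : S} (hb : b ≠ 0) (hP : ((Ideal.span {b}).colon {m}).IsPrime) :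
    HeightOneIdeal ((Ideal.span {b}).colon {m}) := by
  set P := (Ideal.span {b}).colon {m}
  have hbP : b ∈ P := by
    simpa [P, Submodule.mem_colon_singleton] using
      Ideal.mul_mem_right m _ (Ideal.mem_span_singleton_self b)
  have hPne : P ≠ ⊥ := (Submodule.ne_bot_iff P).mpr ⟨b, hbP, hb⟩
  refine ⟨hP, ⟨⊥, Ideal.isPrime_bot, bot_lt_iff_ne_bot.mpr hPne⟩, fun hchain => ?_⟩
  obtain ⟨r, hr⟩ := (hS P hP).2 hchain
  let φ := algebraMap S (Localization.AtPrime P)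
  have hrm (i : Fin 2) : r i * φ m ∈ Ideal.span {φ b} := by
    have := Ideal.map_colon_singleton_le φ (Ideal.span {b}) m (hr.1 i)
    rwa [Submodule.mem_colon_singleton, smul_eq_mul, Ideal.map_span, Set.image_singleton]
      at this
  have hφb : φ b ∈ nonZeroDivisors (Localization.AtPrime P) :=
    mem_nonZeroDivisors_of_ne_zero ((IsLocalization.to_map_ne_zero_of_mem_nonZeroDivisors _
      P.primeCompl_le_nonZeroDivisors) (mem_nonZeroDivisors_of_ne_zero hb))
  apply Ideal.algebraMap_notMem_map_localization_colon (I := Ideal.span {b}) (m := m)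
  rw [Ideal.map_span, Set.image_singleton]
  exact hr.mem_span_singleton_of_mul_mem hφb (hrm 0) (hrm 1)

theorem exists_heightOneIdeal_comap_eq {R T : Type*} [CommRing R] [CommRing T] [Algebra R T]
    [Algebra.IsIntegral R T] (hinj : Function.Injective (algebraMap R T)) {q : Ideal R}
    (hq : HeightOneIdeal q) :
    ∃ Q : Ideal T, HeightOneIdeal Q ∧ Q.comap (algebraMap R T) = q := by
  obtain ⟨_, ⟨q', hq'prime, hq'q⟩, hchain⟩ := hq
  obtain ⟨Q', -, hQ'prime, hQ'q'⟩ :=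
    Ideal.exists_ideal_over_prime_of_isIntegral q' ⊥ (Ideal.comap_bot_le_of_injective _ hinj)
  obtain ⟨Q, hQ'Q, hQprime, hQq⟩ :=
    Ideal.exists_ideal_over_prime_of_isIntegral q Q' (hQ'q'.trans_le hq'q.le)
  refine ⟨Q, ⟨hQprime, ⟨Q', hQ'prime, hQ'Q.lt_of_ne ?_⟩, ?_⟩, hQq⟩
  · rintro rfl
    exact hq'q.ne (hQ'q'.symm.trans hQq)
  · rintro ⟨Q₁, Q₂, hQ₁, hQ₂, h₁₂, h₂⟩
    exact hchain ⟨_, _, hQ₁.comap _, hQ₂.comap _, Ideal.IsIntegral.comap_lt_comap h₁₂,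
      hQq ▸ Ideal.IsIntegral.comap_lt_comap h₂⟩

theorem heightOneIdeal_comap_of_isIntegral {A B C : Type*} [CommRing A] [CommRing B]
    [CommRing C] [Algebra A B] [Algebra B C] [Algebra A C] [IsScalarTower A B C]
    [Algebra.IsIntegral B C] (hinj : Function.Injective (algebraMap B C))
    (hstar : ∀ P : Ideal C, HeightOneIdeal P → HeightOneIdeal (P.comap (algebraMap A C)))
    {q : Ideal B} (hq : HeightOneIdeal q) : HeightOneIdeal (q.comap (algebraMap A B)) := by
  obtain ⟨Q, hQ, rfl⟩ := exists_heightOneIdeal_comap_eq hinj hq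
  rw [Ideal.comap_comap, ← IsScalarTower.algebraMap_eq]
  exact hstar Q hQ

theorem Subring.heightOneIdeal_comap_of_le_integralClosure {A K : Type*} [CommRing A]
    [CommRing K] [Algebra A K]
    (hstar : ∀ P : Ideal (integralClosure A K), HeightOneIdeal P →
      HeightOneIdeal (P.comap (algebraMap A (integralClosure A K))))
    (B : Subring K) (hAB : ∀ a : A, algebraMap A K a ∈ B)
    (hBint : ∀ x ∈ B, x ∈ integralClosure A K) {q : Ideal B} (hq : HeightOneIdeal q) :
    HeightOneIdeal (q.comap ((algebraMap A K).codRestrict B hAB)) := by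
  let _ : Algebra A B := ((algebraMap A K).codRestrict B hAB).toAlgebra
  let _ : Algebra B (integralClosure A K) :=
    (B.subtype.codRestrict _ fun y => hBint y y.2).toAlgebra
  have : IsScalarTower A B (integralClosure A K) := .of_algebraMap_eq fun _ => rfl
  have : Algebra.IsIntegral B (integralClosure A K) := .tower_top A
  have hinj : Function.Injective (algebraMap B (integralClosure A K)) :=
    fun _ _ h => Subtype.ext (congrArg (Subtype.val : integralClosure A K → K) h)
  exact heightOneIdeal_comap_of_isIntegral hinj hstar hq

theorem statement11_general (A : Type) [CommRing A]
    (hstar : ∀ P : Ideal (integralClosure A (FractionRing A)), HeightOneIdeal P →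
      HeightOneIdeal (P.comap (algebraMap A (integralClosure A (FractionRing A)))))
    (B : Subring (FractionRing A))
    (hAB : ∀ a : A, algebraMap A (FractionRing A) a ∈ B)
    (hBint : ∀ x ∈ B, x ∈ integralClosure A (FractionRing A))
    (hBdom : IsDomain B)
    (hBnoeth : IsNoetherianRing B)
    (hBS2 : SerreS2 B) :
    ∀ x : FractionRing A, MemHtOneLoc A (FractionRing A) x → x ∈ B := by
  intro x hx
  by_contra hxB
  set f : A →+* B := (algebraMap A (FractionRing A)).codRestrict B hAB
  obtain ⟨⟨a, s⟩, hxs⟩ := IsLocalization.surj (nonZeroDivisors A) x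
  have hs : IsUnit (algebraMap A (FractionRing A) s) := IsLocalization.map_units _ s
  have hs0 : f s ≠ 0 := by
    have : Nontrivial (FractionRing A) := Subtype.val_injective.nontrivial (α := B)
    exact fun h => hs.ne_zero (congrArg Subtype.val h)
  have ha : f a ∉ Ideal.span {f s} := fun h => hxB <| by
    obtain ⟨u, hu⟩ := Ideal.mem_span_singleton'.mp h
    have hxu : x = u := hs.mul_right_cancel (hxs.trans (congrArg Subtype.val hu).symm)
    exact hxu ▸ u.2
  obtain ⟨m, hle, hP⟩ := Ideal.exists_isPrime_colon_singleton_ge ha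
  obtain ⟨a', t, ht, hxt⟩ := hx _ <| B.heightOneIdeal_comap_of_le_integralClosure hstar hAB
    hBint (hBS2.heightOneIdeal_of_isPrime_colon hs0 hP)
  refine ht (hle ?_)
  rw [Submodule.mem_colon_singleton, smul_eq_mul, Ideal.mem_span_singleton']
  refine ⟨f a', Subtype.ext ?_⟩
  show algebraMap A (FractionRing A) a' * algebraMap A (FractionRing A) s =
    algebraMap A (FractionRing A) t * algebraMap A (FractionRing A) a
  linear_combination algebraMap A (FractionRing A) t * hxs - algebraMap A (FractionRing A) s * hxt

/-- Assume `dim A > 1` and condition (*): every height-one prime of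
the normalization `Ā` (the integral closure of `A` in `K`) contracts to a height-one
prime of `A`.  Then for every intermediate ring `A ⊆ B ⊆ Ā` which is a Noetherian
integral domain satisfying `(S₂)`, one has `A' ⊆ B`. -/
theorem statement11 (A : Type) [CommRing A] [IsDomain A] [IsNoetherianRing A]
    (hdim : 1 < ringKrullDim A)
    (hstar : ∀ P : Ideal (integralClosure A (FractionRing A)), HeightOneIdeal P →
      HeightOneIdeal (P.comap (algebraMap A (integralClosure A (FractionRing A)))))
    (B : Subring (FractionRing A))
    (hAB : ∀ a : A, algebraMap A (FractionRing A) a ∈ B)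
    (hBint : ∀ x ∈ B, x ∈ integralClosure A (FractionRing A))
    (hBdom : IsDomain B)
    (hBnoeth : IsNoetherianRing B)
    (hBS2 : SerreS2 B) :
    ∀ x : FractionRing A, MemHtOneLoc A (FractionRing A) x → x ∈ B :=
  statement11_general A hstar B hAB hBint hBdom hBnoeth hBS2
end

section
/- Let g ∈ K be nonzero and let a, b ∈ R be nonzero elements with b = a·g. Then the R-modules R/(R ∩ gR), gR/(R ∩ gR), R/bR, and R/aR all have finite length, and length_R(R/(R ∩ gR)) − length_R(gR/(R ∩ gR)) = length_R(R/bR) − length_R(R/aR) as integers. -/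
/-!
Division by `a` is an injective `R`-linear map `R → K` carrying `aR` onto `R` and `bR`
onto `gR`, so the first two modules are `aR/(aR ∩ bR)` and `bR/(aR ∩ bR)`. Computing the
length of `R/(aR ∩ bR)` once through `aR` and once through `bR` gives
`ℓ(R/aR) + ℓ(aR/(aR ∩ bR)) = ℓ(R/bR) + ℓ(bR/(aR ∩ bR))`, and every term is finite because
`R/abR` has dimension zero.
-/

/-- The `R`-module `M` has (finite) length `d`. -/
def HasLength (R M : Type*) [Ring R] [AddCommGroup M] [Module R M] (d : ℕ) : Prop :=
  ∃ c : Fin (d + 1) → Submodule R M, c 0 = ⊥ ∧ c (Fin.last d) = ⊤ ∧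
    ∀ i : Fin d, c i.castSucc ⋖ c i.succ

open Function Submodule

section Length

variable {R M N : Type*} [Ring R] [AddCommGroup M] [Module R M] [AddCommGroup N] [Module R N]

theorem hasLength_iff_length_eq {d : ℕ} : HasLength R M d ↔ Module.length R M = d := by
  constructor
  · rintro ⟨c, hc₀, hcₗ, hc⟩
    exact (Module.length_compositionSeries ⟨d, c, hc⟩ hc₀ hcₗ).symm
  · intro h
    obtain ⟨⟨n, c, hc⟩, hc₀, hcₗ⟩ := isFiniteLength_iff_exists_compositionSeries.1
      (Module.length_ne_top_iff.1 (h ▸ ENat.natCast_ne_top d))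
    obtain rfl : n = d := by
      exact_mod_cast (Module.length_compositionSeries ⟨n, c, hc⟩ hc₀ hcₗ).trans h
    exact ⟨c, hc₀, hcₗ, hc⟩

theorem Submodule.length_quotient_eq_add {P Q : Submodule R M} (h : Q ≤ P) :
    Module.length R (M ⧸ Q) =
      Module.length R (P ⧸ Q.comap P.subtype) + Module.length R (M ⧸ P) := by
  refine Module.length_eq_add_of_exact ((Q.comap P.subtype).mapQ Q P.subtype le_rfl)
    (Q.factor h) ?_ (factor_surjective h) ?_
  · rw [← LinearMap.ker_eq_bot, ker_mapQ, mkQ_map_self]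
  · rw [LinearMap.exact_iff]
    simp [factor, ker_mapQ, range_mapQ]

theorem Submodule.length_quotient_comap_subtype_le {P Q : Submodule R M} (h : Q ≤ P) :
    Module.length R (P ⧸ Q.comap P.subtype) ≤ Module.length R (M ⧸ Q) :=
  (length_quotient_eq_add h).symm ▸ le_self_add

theorem Submodule.length_quotient_add_length_quotient_inf (A B : Submodule R M) :
    Module.length R (M ⧸ A) + Module.length R (A ⧸ (A ⊓ B).comap A.subtype) =
      Module.length R (M ⧸ B) + Module.length R (B ⧸ (A ⊓ B).comap B.subtype) := by
  rw [add_comm, ← length_quotient_eq_add inf_le_left, add_comm,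
    length_quotient_eq_add inf_le_right]

theorem Submodule.exists_hasLength_quotient_inf {A B : Submodule R M}
    (hfin : IsFiniteLength R (M ⧸ (A ⊓ B))) :
    ∃ l₁ l₂ l₃ l₄ : ℕ,
      HasLength R (A ⧸ (A ⊓ B).comap A.subtype) l₁ ∧
      HasLength R (B ⧸ (A ⊓ B).comap B.subtype) l₂ ∧
      HasLength R (M ⧸ B) l₃ ∧ HasLength R (M ⧸ A) l₄ ∧
      (l₁ : ℤ) - l₂ = (l₃ : ℤ) - l₄ := by
  have h := Module.length_ne_top_iff.2 hfin
  obtain ⟨l₁, hl₁⟩ := ENat.ne_top_iff_exists.1 <|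
    ne_top_of_le_ne_top h (length_quotient_comap_subtype_le inf_le_left)
  obtain ⟨l₂, hl₂⟩ := ENat.ne_top_iff_exists.1 <|
    ne_top_of_le_ne_top h (length_quotient_comap_subtype_le inf_le_right)
  obtain ⟨l₃, hl₃⟩ := ENat.ne_top_iff_exists.1 <| ne_top_of_le_ne_top h <|
    Module.length_le_of_surjective _ (factor_surjective (inf_le_right : A ⊓ B ≤ B))
  obtain ⟨l₄, hl₄⟩ := ENat.ne_top_iff_exists.1 <| ne_top_of_le_ne_top h <|
    Module.length_le_of_surjective _ (factor_surjective (inf_le_left : A ⊓ B ≤ A))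
  have key := length_quotient_add_length_quotient_inf A B
  rw [← hl₁, ← hl₂, ← hl₃, ← hl₄] at key
  refine ⟨l₁, l₂, l₃, l₄, hasLength_iff_length_eq.2 hl₁.symm,
    hasLength_iff_length_eq.2 hl₂.symm, hasLength_iff_length_eq.2 hl₃.symm,
    hasLength_iff_length_eq.2 hl₄.symm, ?_⟩
  norm_cast at key
  omega

theorem Submodule.length_quotient_comap_subtype_map {f : M →ₗ[R] N} (hf : Injective f)
    (P Q : Submodule R M) :
    Module.length R (P.map f ⧸ (Q.map f).comap (P.map f).subtype) =
      Module.length R (P ⧸ Q.comap P.subtype) := by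
  refine (Quotient.equiv _ _ (equivMapOfInjective f hf P) ?_).length_eq.symm
  apply map_injective_of_injective (P.map f).injective_subtype
  have hcomp : (P.map f).subtype ∘ₗ (equivMapOfInjective f hf P : P →ₗ[R] P.map f) =
      f ∘ₗ P.subtype :=
    LinearMap.ext (coe_equivMapOfInjective_apply f hf P)
  rw [← map_comp, hcomp, map_comp, map_comap_subtype, map_comap_subtype, map_inf f hf]

end Length

theorem Submodule.map_toSpanSingleton_span_singleton {R M : Type*} [CommRing R]
    [AddCommGroup M] [Module R M] (x : M) (r : R) :
    (span R {r}).map (LinearMap.toSpanSingleton R M x) = span R {r • x} := by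
  rw [map_span, Set.image_singleton, LinearMap.toSpanSingleton_apply]

theorem isFiniteLength_quotient_of_mem_nonZeroDivisors {R : Type*} [CommRing R]
    [IsNoetherianRing R] [Ring.KrullDimLE 1 R] {I : Ideal R} {x : R}
    (hx : x ∈ nonZeroDivisors R) (hxI : x ∈ I) : IsFiniteLength R (R ⧸ I) :=
  have hle : Ideal.span {x} ≤ I := (Ideal.span_singleton_le_iff_mem I).2 hxI
  (isFiniteLength_quotient_span_singleton R hx).of_surjective (factor_surjective hle)

theorem statement15_general (R : Type) [CommRing R] [IsDomain R] [IsNoetherianRing R]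
    (hdim : ringKrullDim R = 1)
    (g : FractionRing R)
    (a b : R) (ha : a ≠ 0) (hb : b ≠ 0)
    (hab : algebraMap R (FractionRing R) b = algebraMap R (FractionRing R) a * g) :
    ∃ l₁ l₂ l₃ l₄ : ℕ,
      HasLength R
        ((LinearMap.range (Algebra.linearMap R (FractionRing R))) ⧸
          (Submodule.comap (LinearMap.range (Algebra.linearMap R (FractionRing R))).subtype
            (LinearMap.range (Algebra.linearMap R (FractionRing R)) ⊓
              Submodule.span R {g}))) l₁ ∧
      HasLength R
        ((Submodule.span R {g} : Submodule R (FractionRing R)) ⧸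
          (Submodule.comap (Submodule.span R {g} : Submodule R (FractionRing R)).subtype
            (LinearMap.range (Algebra.linearMap R (FractionRing R)) ⊓
              Submodule.span R {g}))) l₂ ∧
      HasLength R (R ⧸ Ideal.span {b}) l₃ ∧
      HasLength R (R ⧸ Ideal.span {a}) l₄ ∧
      (l₁ : ℤ) - l₂ = (l₃ : ℤ) - l₄ := by
  have : Ring.KrullDimLE 1 R := Ring.krullDimLE_iff.2 hdim.le
  have ha' : algebraMap R (FractionRing R) a ≠ 0 :=
    IsFractionRing.to_map_ne_zero_of_mem_nonZeroDivisors (mem_nonZeroDivisors_of_ne_zero ha)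
  set f := LinearMap.toSpanSingleton R (FractionRing R) (algebraMap R (FractionRing R) a)⁻¹
  have hf : Injective f := smul_left_injective R (inv_ne_zero ha')
  have hfa :
      map f (Ideal.span {a}) = LinearMap.range (Algebra.linearMap R (FractionRing R)) := by
    rw [← Ideal.submodule_span_eq, map_toSpanSingleton_span_singleton, Algebra.smul_def,
      mul_inv_cancel₀ ha', ← one_eq_span, one_eq_range]
  have hfb : map f (Ideal.span {b}) = span R {g} := by
    rw [← Ideal.submodule_span_eq, map_toSpanSingleton_span_singleton, Algebra.smul_def, hab,
      mul_right_comm, mul_inv_cancel₀ ha', one_mul]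
  have hfin : IsFiniteLength R (R ⧸ (Ideal.span {a} ⊓ Ideal.span {b})) :=
    isFiniteLength_quotient_of_mem_nonZeroDivisors
      (mem_nonZeroDivisors_of_ne_zero (mul_ne_zero ha hb))
      ⟨Ideal.mul_mem_right _ _ (Ideal.mem_span_singleton_self a),
        Ideal.mul_mem_left _ _ (Ideal.mem_span_singleton_self b)⟩
  obtain ⟨l₁, l₂, l₃, l₄, h₁, h₂, h₃, h₄, h⟩ := exists_hasLength_quotient_inf hfin
  refine ⟨l₁, l₂, l₃, l₄, ?_, ?_, h₃, h₄, h⟩ <;>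
    rwa [hasLength_iff_length_eq, ← hfa, ← hfb, ← map_inf f hf,
      length_quotient_comap_subtype_map hf, ← hasLength_iff_length_eq]

/-- For nonzero `g ∈ K` and nonzero `a, b ∈ R` with `b = a·g`, the
modules `R/(R ∩ gR)`, `gR/(R ∩ gR)`, `R/bR` and `R/aR` have finite lengths
`l₁, l₂, l₃, l₄`, and `l₁ − l₂ = l₃ − l₄` in `ℤ`. -/
theorem statement15 (R : Type) [CommRing R] [IsDomain R] [IsNoetherianRing R]
    [IsLocalRing R] (hdim : ringKrullDim R = 1)
    (g : FractionRing R) (hg : g ≠ 0)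
    (a b : R) (ha : a ≠ 0) (hb : b ≠ 0)
    (hab : algebraMap R (FractionRing R) b = algebraMap R (FractionRing R) a * g) :
    ∃ l₁ l₂ l₃ l₄ : ℕ,
      HasLength R
        ((LinearMap.range (Algebra.linearMap R (FractionRing R))) ⧸
          (Submodule.comap (LinearMap.range (Algebra.linearMap R (FractionRing R))).subtype
            (LinearMap.range (Algebra.linearMap R (FractionRing R)) ⊓
              Submodule.span R {g}))) l₁ ∧
      HasLength R
        ((Submodule.span R {g} : Submodule R (FractionRing R)) ⧸
          (Submodule.comap (Submodule.span R {g} : Submodule R (FractionRing R)).subtype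
            (LinearMap.range (Algebra.linearMap R (FractionRing R)) ⊓
              Submodule.span R {g}))) l₂ ∧
      HasLength R (R ⧸ Ideal.span {b}) l₃ ∧
      HasLength R (R ⧸ Ideal.span {a}) l₄ ∧
      (l₁ : ℤ) - l₂ = (l₃ : ℤ) - l₄ :=
  statement15_general R hdim g a b ha hb hab
end

section
/- Let R̃ be the integral closure of R in K, and assume R̃ is finitely generated as an R-module. If a, b ∈ R are nonzero and g = b/a is a unit of R̃, then length_R(R/bR) = length_R(R/aR). -/
/-!
Write `ℓ(f)` for the length of the cokernel of an `R`-linear map `f`. If `g` is injective, then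
`0 → coker f → coker (g ∘ f) → coker g → 0` is exact, so `ℓ(g ∘ f) = ℓ(f) + ℓ(g)`. Multiplication
by `a` on `R` and on `R̃` commutes with the inclusion `ι : R → R̃`, so computing `ℓ` of the
composite both ways and cancelling the finite `ℓ(ι) = length(R̃/R)` gives
`length(R/aR) = length(R̃/aR̃)`. As `b = a g` with `g` a unit of `R̃`, `aR̃ = bR̃`.
-/

lemma hasLength_of_length_eq {R M : Type*} [Ring R] [AddCommGroup M] [Module R M] {d : ℕ}
    (h : Module.length R M = d) : HasLength R M d := by
  obtain ⟨s, hs₀, hs₁⟩ := isFiniteLength_iff_exists_compositionSeries.mp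
    (Module.length_ne_top_iff.mp (h ▸ ENat.natCast_ne_top d))
  have hd : s.length = d := by
    exact_mod_cast (Module.length_compositionSeries s hs₀ hs₁).trans h
  subst hd
  exact ⟨s.toFun, hs₀, hs₁, s.step⟩

section Cokernel

open LinearMap Submodule

variable {R M N P : Type*} [Ring R] [AddCommGroup M] [Module R M] [AddCommGroup N] [Module R N]
  [AddCommGroup P] [Module R P]

lemma Module.length_quotient_range_comp (f : N →ₗ[R] M) {g : M →ₗ[R] P}
    (hg : Function.Injective g) :
    Module.length R (P ⧸ range (g ∘ₗ f)) =
      Module.length R (M ⧸ range f) + Module.length R (P ⧸ range g) := by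
  have hle : range f ≤ comap g (range (g ∘ₗ f)) := by rw [← map_le_iff_le_comap, range_comp]
  refine Module.length_eq_add_of_exact ((range f).mapQ _ g hle) (factor (range_comp_le_range f g))
    ?_ (factor_surjective _) ?_
  · rw [← ker_eq_bot, ker_mapQ, range_comp, comap_map_eq_of_injective hg, mkQ_map_self]
  · rw [exact_iff]; simp [factor, ker_mapQ, range_mapQ]

lemma Module.length_quotient_range_eq_of_comp_eq {ι : N →ₗ[R] M} (hι : Function.Injective ι)
    (hfin : Module.length R (M ⧸ range ι) ≠ ⊤) {φ : N →ₗ[R] N} {ψ : M →ₗ[R] M}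
    (hψ : Function.Injective ψ) (hcomm : ψ ∘ₗ ι = ι ∘ₗ φ) :
    Module.length R (N ⧸ range φ) = Module.length R (M ⧸ range ψ) := by
  have h₁ := Module.length_quotient_range_comp ι hψ
  rw [hcomm, Module.length_quotient_range_comp φ hι, add_comm (Module.length R (M ⧸ range ι))]
    at h₁
  exact WithTop.add_right_cancel hfin h₁

lemma Module.length_quotient_range_ne_top_of_comp {ι : N →ₗ[R] M} {κ : M →ₗ[R] N}
    (hκ : Function.Injective κ) (h : Module.length R (N ⧸ range (κ ∘ₗ ι)) ≠ ⊤) :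
    Module.length R (M ⧸ range ι) ≠ ⊤ := by
  rw [Module.length_quotient_range_comp ι hκ] at h
  exact fun h' => h (by rw [h', top_add])

end Cokernel

section Algebra

variable {R S : Type*} [CommRing R] [CommRing S] [IsDomain S] [Algebra R S]

lemma Ring.ord_eq_length_quotient_span_algebraMap (hinj : Function.Injective (algebraMap R S))
    (hfin : Module.length R (S ⧸ LinearMap.range (Algebra.linearMap R S)) ≠ ⊤)
    {a : R} (ha : a ≠ 0) :
    Ring.ord R a = Module.length R (S ⧸ (Ideal.span {algebraMap R S a}).restrictScalars R) := by
  rw [Ring.ord, ← Ideal.range_mul', ← Ideal.range_mul]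
  refine Module.length_quotient_range_eq_of_comp_eq (ι := Algebra.linearMap R S) hinj hfin ?_ ?_
  · exact mul_right_injective₀ ((map_ne_zero_iff _ hinj).2 ha)
  · ext; simp

end Algebra

section FractionField

variable {R K : Type*} [CommRing R] [IsDomain R] [IsNoetherianRing R] [Ring.KrullDimLE 1 R]
  [Field K] [Algebra R K] [IsFractionRing R K]

-- A common denominator `d` of `S` embeds `S` into `R` by `s ↦ d s`, and `R ⧸ dR` has finite length.
lemma Subalgebra.length_quotient_range_algebraMap_ne_top (S : Subalgebra R K)
    [Module.Finite R S] :
    Module.length R (S ⧸ LinearMap.range (Algebra.linearMap R S)) ≠ ⊤ := by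
  obtain ⟨d, hd, hdS⟩ := FractionalIdeal.isFractional_of_fg (S := nonZeroDivisors R)
    (Module.Finite.iff_fg.mp ‹Module.Finite R S› : (Subalgebra.toSubmodule S).FG)
  let ιK := Algebra.linearMap R K
  have hιK : Function.Injective ιK := IsFractionRing.injective R K
  let μ : S →ₗ[R] LinearMap.range ιK :=
    (d • S.val.toLinearMap).codRestrict _ fun s => hdS s s.2
  let κ : S →ₗ[R] R := (LinearEquiv.ofInjective ιK hιK).symm.toLinearMap ∘ₗ μ
  have hκ : Function.Injective κ := by
    refine (LinearEquiv.ofInjective ιK hιK).symm.injective.comp fun s t hst => Subtype.ext ?_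
    have hdst : d • (s : K) = d • (t : K) := congrArg Subtype.val hst
    exact smul_right_injective K (nonZeroDivisors.ne_zero hd) hdst
  have hκι : κ ∘ₗ Algebra.linearMap R S = LinearMap.mul R R d := by
    ext
    apply hιK
    rw [LinearMap.comp_apply, LinearMap.comp_apply, LinearEquiv.coe_coe,
      LinearEquiv.ofInjective_symm_apply]
    show d • ((algebraMap R S 1 : S) : K) = algebraMap R K (d * 1)
    simp [Algebra.smul_def]
  refine Module.length_quotient_range_ne_top_of_comp hκ ?_
  rw [hκι, Ideal.range_mul']
  exact Ring.ord_ne_top hd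

end FractionField

theorem statement17_general (R : Type) [CommRing R] [IsDomain R] [IsNoetherianRing R]
    (hdim : ringKrullDim R = 1)
    (hfin : Module.Finite R (integralClosure R (FractionRing R)))
    (a b : R) (ha : a ≠ 0) (hb : b ≠ 0)
    (u : integralClosure R (FractionRing R)) (hu : IsUnit u)
    (hg : algebraMap R (FractionRing R) a * (u : FractionRing R)
        = algebraMap R (FractionRing R) b) :
    ∃ l : ℕ, HasLength R (R ⧸ Ideal.span {b}) l ∧
      HasLength R (R ⧸ Ideal.span {a}) l := by
  have : Ring.KrullDimLE 1 R := Ring.krullDimLE_iff.mpr hdim.le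
  have hinj : Function.Injective (algebraMap R (integralClosure R (FractionRing R))) :=
    fun x y hxy => IsFractionRing.injective R (FractionRing R) (congrArg Subtype.val hxy)
  have hfinS := (integralClosure R (FractionRing R)).length_quotient_range_algebraMap_ne_top
  have hspan : Ideal.span {algebraMap R (integralClosure R (FractionRing R)) b} =
      Ideal.span {algebraMap R _ a} := by
    have hgS : algebraMap R (integralClosure R (FractionRing R)) a * u = algebraMap R _ b :=
      Subtype.ext hg
    rw [← hgS, Ideal.span_singleton_mul_right_unit hu]
  obtain ⟨l, hl⟩ :=
    ENat.ne_top_iff_exists.mp (Ring.ord_ne_top (mem_nonZeroDivisors_of_ne_zero ha))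
  have hab : Ring.ord R b = Ring.ord R a := by
    rw [Ring.ord_eq_length_quotient_span_algebraMap hinj hfinS ha,
      Ring.ord_eq_length_quotient_span_algebraMap hinj hfinS hb, hspan]
  exact ⟨l, hasLength_of_length_eq (hab.trans hl.symm), hasLength_of_length_eq hl.symm⟩

/-- Let `R̃` be the integral closure of `R` in `K`, assumed to be a
finitely generated `R`-module.  If `a, b ∈ R` are nonzero and `g = b/a` is a unit of
`R̃`, then `length_R(R/bR) = length_R(R/aR)`. -/
theorem statement17 (R : Type) [CommRing R] [IsDomain R] [IsNoetherianRing R]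
    [IsLocalRing R] (hdim : ringKrullDim R = 1)
    (hfin : Module.Finite R (integralClosure R (FractionRing R)))
    (a b : R) (ha : a ≠ 0) (hb : b ≠ 0)
    (u : integralClosure R (FractionRing R)) (hu : IsUnit u)
    (hg : algebraMap R (FractionRing R) a * (u : FractionRing R)
        = algebraMap R (FractionRing R) b) :
    ∃ l : ℕ, HasLength R (R ⧸ Ideal.span {b}) l ∧
      HasLength R (R ⧸ Ideal.span {a}) l :=
  statement17_general R hdim hfin a b ha hb u hu hg
end
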